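/- arXiv:1104.3724 — 2 statements merged into one kernel-verified Lean document; each statement's English description precedes it below -/
import Mathlib

section
/- For any primitive sequence A of integers ≥ 2, the series ∑_{a ∈ A} 1/(a · log a) converges. -/
/-!
Erdős's argument. For `a ∈ A` let `M_a` be the set of multiples `a * m` where `m` has no prime
factor `≤ a`, i.e. `m` is coprime to the primorial `a#`. If `a < b` and `a * m = b * m'` with `m'`
coprime to `b#`, then `a` is coprime to `m'`, so `a ∣ b`; hence for a primitive set the sets `M_a`
are pairwise disjoint. `M_a` has density `φ(a#) / (a * a#) = a⁻¹ ∏_{p ≤ a} (1 - p⁻¹)`, so these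
densities sum to at most `1`. Mertens' estimates `∑_{p ≤ n} log p / p ≤ log n + O(1)` and, by Abel
summation, `∑_{p ≤ n} 1 / p ≤ log log n + O(1)` give `∏_{p ≤ n} (1 - p⁻¹) ≫ 1 / log n`, so
`1 / (a log a) ≪ φ(a#) / (a * a#)`.
-/

open Finset Real
open scoped Nat

theorem card_filter_coprime_range_mul (Q k : ℕ) :
    #{m ∈ range (k * Q) | Q.Coprime m} = k * φ Q := by
  induction k with
  | zero => simp
  | succ k ih =>
    rw [Nat.succ_mul, range_eq_Ico,
      ← Ico_union_Ico_eq_Ico (Nat.zero_le (k * Q)) (Nat.le_add_right _ _), filter_union,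
      card_union_of_disjoint (disjoint_filter_filter (Ico_disjoint_Ico_consecutive ..)),
      ← range_eq_Ico, ih, Nat.filter_coprime_Ico_eq_totient, Nat.succ_mul]

theorem Nat.coprime_of_coprime_primorial {a b m : ℕ} (ha : a ≠ 0) (hab : a ≤ b)
    (h : (primorial b).Coprime m) : a.Coprime m :=
  Nat.coprime_of_dvd fun _ hp hpa hpm =>
    hp.one_lt.ne' <| Nat.eq_one_of_dvd_one <| h ▸
      Nat.dvd_gcd
        (hp.dvd_primorial_iff.2 ((Nat.le_of_dvd (Nat.pos_of_ne_zero ha) hpa).trans hab)) hpm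

def coprimePrimorialMultiples (a N : ℕ) : Finset ℕ :=
  image (a * ·) {m ∈ range (N / a) | (primorial a).Coprime m}

theorem card_coprimePrimorialMultiples {a N : ℕ} (ha : a ≠ 0) (hN : a * primorial a ∣ N) :
    #(coprimePrimorialMultiples a N) = N / (a * primorial a) * φ (primorial a) := by
  rw [coprimePrimorialMultiples, card_image_of_injective _ (mul_right_injective₀ ha),
    ← Nat.div_div_eq_div_mul, ← card_filter_coprime_range_mul,
    Nat.div_mul_cancel ((Nat.dvd_div_iff_mul_dvd (dvd_of_mul_right_dvd hN)).2 hN)]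

theorem coprimePrimorialMultiples_subset_range {a N : ℕ} (ha : a ∣ N) :
    coprimePrimorialMultiples a N ⊆ range N := by
  intro n hn
  obtain ⟨m, hm, rfl⟩ := mem_image.1 hn
  exact mem_range.2 ((Nat.lt_div_iff_mul_lt' ha _).1 (mem_range.1 (mem_filter.1 hm).1))

theorem disjoint_coprimePrimorialMultiples {a b N : ℕ} (ha : a ≠ 0) (hab : a ≤ b)
    (hdvd : ¬ a ∣ b) :
    Disjoint (coprimePrimorialMultiples a N) (coprimePrimorialMultiples b N) := by
  refine disjoint_left.2 fun n hna hnb => hdvd ?_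
  obtain ⟨m, -, rfl⟩ := mem_image.1 hna
  obtain ⟨m', hm', hmm'⟩ := mem_image.1 hnb
  exact (Nat.coprime_of_coprime_primorial ha hab (mem_filter.1 hm').2).dvd_of_dvd_mul_right
    ⟨m, hmm'⟩

theorem sum_totient_primorial_div_le_one {s : Finset ℕ} (hs : ∀ a ∈ s, a ≠ 0)
    (hprim : (s : Set ℕ).Pairwise fun a b => ¬ a ∣ b) :
    ∑ a ∈ s, (φ (primorial a) : ℝ) / (a * primorial a) ≤ 1 := by
  set N := ∏ a ∈ s, a * primorial a
  have hN : (N : ℝ) ≠ 0 := by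
    simpa [N, prod_eq_zero_iff, primorial_ne_zero] using hs
  have hdvd : ∀ a ∈ s, a * primorial a ∣ N := fun a ha => dvd_prod_of_mem _ ha
  have hdisj : (s : Set ℕ).PairwiseDisjoint (coprimePrimorialMultiples · N) := by
    intro a ha b hb hab
    rcases le_total a b with h | h
    · exact disjoint_coprimePrimorialMultiples (hs a ha) h (hprim ha hb hab)
    · exact (disjoint_coprimePrimorialMultiples (hs b hb) h (hprim hb ha hab.symm)).symm
  have hcount : ∑ a ∈ s, #(coprimePrimorialMultiples a N) ≤ N := by
    rw [← card_biUnion hdisj]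
    refine (card_le_card (biUnion_subset.2 fun a ha => ?_)).trans (card_range N).le
    exact coprimePrimorialMultiples_subset_range (dvd_of_mul_right_dvd (hdvd a ha))
  calc ∑ a ∈ s, (φ (primorial a) : ℝ) / (a * primorial a)
      = (∑ a ∈ s, (#(coprimePrimorialMultiples a N) : ℝ)) / N := by
        rw [sum_div]
        refine sum_congr rfl fun a ha => ?_
        rw [card_coprimePrimorialMultiples (hs a ha) (hdvd a ha), Nat.cast_mul,
          Nat.cast_div (hdvd a ha) (by simpa [primorial_ne_zero] using hs a ha)]
        push_cast
        field_simp
    _ ≤ 1 := div_le_one_of_le₀ (by exact_mod_cast hcount) (Nat.cast_nonneg N)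

theorem summable_totient_primorial_div {A : Set ℕ} (hA : ∀ a ∈ A, a ≠ 0)
    (hprim : A.Pairwise fun a b => ¬ a ∣ b) :
    Summable fun a : A => (φ (primorial a) : ℝ) / (a * primorial a) := by
  refine summable_of_sum_le (c := 1) (fun _ => by positivity) fun u => ?_
  have hu : ∀ a ∈ u.map (Function.Embedding.subtype (· ∈ A)), a ∈ A := fun a ha => by
    obtain ⟨x, -, rfl⟩ := mem_map.1 ha
    exact x.2
  simpa using sum_totient_primorial_div_le_one (fun a ha => hA a (hu a ha)) (hprim.mono hu)

theorem div_le_factorization_factorial {n p : ℕ} (hp : p.Prime) :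
    n / p ≤ (n !).factorization p := by
  rcases lt_or_ge n p with h | h
  · simp [Nat.div_eq_of_lt h]
  rw [Nat.factorization_factorial hp (Nat.lt_succ_self _)]
  have : 1 ∈ Ico 1 (Nat.log p n + 1) := by
    simpa using Nat.log_pos hp.one_lt h
  simpa using single_le_sum (f := fun i => n / p ^ i) (fun _ _ => Nat.zero_le _) this

theorem sum_primesLE_div_mul_log_le_log_factorial (n : ℕ) :
    ∑ p ∈ n.primesLE, ((n / p : ℕ) : ℝ) * log p ≤ log (n ! : ℝ) := by
  have hsub : n.primesLE ⊆ (n !).primeFactors := fun p hp =>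
    Nat.mem_primeFactors.2 ⟨Nat.prime_of_mem_primesLE hp,
      (Nat.prime_of_mem_primesLE hp).dvd_factorial.2 (Nat.le_of_mem_primesLE hp),
      n.factorial_ne_zero⟩
  calc ∑ p ∈ n.primesLE, ((n / p : ℕ) : ℝ) * log p
      ≤ ∑ p ∈ n.primesLE, ((n !).factorization p : ℝ) * log p := by
        gcongr with p hp
        exact div_le_factorization_factorial (Nat.prime_of_mem_primesLE hp)
    _ ≤ ∑ p ∈ (n !).primeFactors, ((n !).factorization p : ℝ) * log p :=
        sum_le_sum_of_subset_of_nonneg hsub fun p _ _ => by positivity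
    _ = log (n ! : ℝ) := (log_nat_eq_sum_factorization _).symm

theorem log_factorial_le (n : ℕ) : log (n ! : ℝ) ≤ n * log n := by
  rw [← log_pow]
  exact log_le_log (by positivity) (by exact_mod_cast Nat.factorial_le_pow n)

theorem sum_primesLE_log_div_le (n : ℕ) :
    ∑ p ∈ n.primesLE, log p / p ≤ log n + log 4 := by
  rcases n.eq_zero_or_pos with rfl | hn
  · simp [Nat.primesLE_zero, log_nonneg]
  have hn' : (0 : ℝ) < n := by exact_mod_cast hn
  refine le_of_mul_le_mul_left ?_ hn'
  calc (n : ℝ) * ∑ p ∈ n.primesLE, log p / p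
      = ∑ p ∈ n.primesLE, ((n : ℝ) / p) * log p := by
        rw [mul_sum]; congr! 1 with p; ring
    _ ≤ ∑ p ∈ n.primesLE, (((n / p : ℕ) : ℝ) + 1) * log p := by
        gcongr with p
        rw [← Nat.floor_div_eq_div (K := ℝ)]
        exact (Nat.lt_floor_add_one _).le
    _ = ∑ p ∈ n.primesLE, ((n / p : ℕ) : ℝ) * log p + Chebyshev.theta n := by
        rw [Chebyshev.theta_eq_sum_primesLE_log, ← sum_add_distrib]
        congr! 1 with p; ring
    _ ≤ n * log n + log 4 * n := by
        gcongr
        · exact (sum_primesLE_div_mul_log_le_log_factorial n).trans (log_factorial_le n)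
        · exact Chebyshev.theta_le_log4_mul_x hn'.le
    _ = n * (log n + log 4) := by ring

theorem sum_Icc_div_log_le {w : ℕ → ℝ} {c : ℝ}
    (hw : ∀ m, 2 ≤ m → ∑ k ∈ Icc 2 m, w k ≤ log m + c) {n : ℕ} (hn : 2 ≤ n) :
    ∑ k ∈ Icc 2 n, w k / log k ≤ log (log n) + 1 - log (log 2) + c / log 2 := by
  have hlog : ∀ m : ℕ, 2 ≤ m → 0 < log m := fun m hm => log_pos (by exact_mod_cast hm)
  -- Abel summation: with `T m = ∑_{k ≤ m} w k`, the left side of `key` grows at each step by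
  -- `T m (1 / log m - 1 / log (m + 1))`, which is at most the growth of `log log m - c / log m`.
  have key : ∀ m, 2 ≤ m → ∑ k ∈ Icc 2 m, w k / log k - (∑ k ∈ Icc 2 m, w k) / log m
      ≤ (log (log m) - c / log m) - (log (log 2) - c / log 2) := by
    intro m hm
    induction m, hm using Nat.le_induction with
    | base => simp
    | succ m hm ih =>
      set T := ∑ k ∈ Icc 2 m, w k
      have hu := hlog m hm
      have hv := hlog (m + 1) (by omega)
      have huv : log m ≤ log (m + 1 : ℕ) := log_le_log (by positivity) (by simp)
      have hlog_log : log (log m) - log (log (m + 1 : ℕ)) ≤ log m / log (m + 1 : ℕ) - 1 := by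
        rw [← log_div hu.ne' hv.ne']
        exact log_le_sub_one_of_pos (by positivity)
      have hT : T * ((log m)⁻¹ - (log (m + 1 : ℕ))⁻¹)
          ≤ (log m + c) * ((log m)⁻¹ - (log (m + 1 : ℕ))⁻¹) :=
        mul_le_mul_of_nonneg_right (hw m hm) (sub_nonneg.2 (inv_anti₀ hu huv))
      rw [sum_Icc_succ_top (by omega), sum_Icc_succ_top (by omega)]
      have hexpand : (log m + c) * ((log m)⁻¹ - (log (m + 1 : ℕ))⁻¹)
          = 1 - log m / log (m + 1 : ℕ) + c / log m - c / log (m + 1 : ℕ) := by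
        field_simp
        ring
      have hsplit : ∑ k ∈ Icc 2 m, w k / log k + w (m + 1) / log (m + 1 : ℕ)
            - (T + w (m + 1)) / log (m + 1 : ℕ)
          = (∑ k ∈ Icc 2 m, w k / log k - T / log m)
            + T * ((log m)⁻¹ - (log (m + 1 : ℕ))⁻¹) := by
        ring
      rw [hsplit]
      linarith
  have hT : (∑ k ∈ Icc 2 n, w k) / log n ≤ 1 + c / log n := by
    calc (∑ k ∈ Icc 2 n, w k) / log n ≤ (log n + c) / log n := by gcongr; exact hw n hn
      _ = 1 + c / log n := by rw [add_div, div_self (hlog n hn).ne']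
  linarith [key n hn]

theorem sum_primesLE_inv_le {n : ℕ} (hn : 2 ≤ n) :
    ∑ p ∈ n.primesLE, (p : ℝ)⁻¹ ≤ log (log n) + 3 - log (log 2) := by
  have hw : ∀ m : ℕ, 2 ≤ m →
      ∑ k ∈ Icc 2 m, (if k.Prime then log k / k else 0) ≤ log m + log 4 := fun m _ => by
    simpa [← sum_filter, ← Nat.primesLE_eq_filter_Icc_two] using sum_primesLE_log_div_le m
  have h4 : log 4 / log 2 = 2 := by
    rw [show (4 : ℝ) = 2 ^ 2 by norm_num, log_pow, Nat.cast_ofNat, mul_div_assoc,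
      div_self (log_pos one_lt_two).ne', mul_one]
  have hsum : ∑ k ∈ Icc 2 n, (if k.Prime then log k / k else 0) / log k
      = ∑ p ∈ n.primesLE, (p : ℝ)⁻¹ := by
    rw [Nat.primesLE_eq_filter_Icc_two, sum_filter]
    refine sum_congr rfl fun k hk => ?_
    have hk : log k ≠ 0 := (log_pos (by exact_mod_cast (mem_Icc.1 hk).1)).ne'
    split_ifs
    · field_simp
    · simp
  have := sum_Icc_div_log_le hw hn
  rw [h4, hsum] at this
  linarith

theorem sum_Icc_inv_sub_one_sub_inv {n : ℕ} (hn : 1 ≤ n) :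
    ∑ k ∈ Icc 2 n, (((k : ℝ) - 1)⁻¹ - (k : ℝ)⁻¹) = 1 - (n : ℝ)⁻¹ := by
  induction n, hn using Nat.le_induction with
  | base => simp
  | succ n hn ih =>
    rw [sum_Icc_succ_top (by omega), ih]
    push_cast
    ring

theorem exp_neg_inv_sub_one_le_one_sub_inv {x : ℝ} (hx : 1 < x) :
    exp (-(x - 1)⁻¹) ≤ 1 - x⁻¹ := by
  have hx1 : 0 < x - 1 := sub_pos.2 hx
  calc exp (-(x - 1)⁻¹) = (exp (x - 1)⁻¹)⁻¹ := exp_neg _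
    _ ≤ ((x - 1)⁻¹ + 1)⁻¹ := inv_anti₀ (by positivity) (add_one_le_exp _)
    _ = 1 - x⁻¹ := by field_simp; ring

theorem exp_div_log_le_prod_primesLE_one_sub_inv {n : ℕ} (hn : 2 ≤ n) :
    exp (log (log 2) - 4) / log n ≤ ∏ p ∈ n.primesLE, (1 - (p : ℝ)⁻¹) := by
  have htel : ∑ p ∈ n.primesLE, (((p : ℝ) - 1)⁻¹ - (p : ℝ)⁻¹) ≤ 1 := by
    calc ∑ p ∈ n.primesLE, (((p : ℝ) - 1)⁻¹ - (p : ℝ)⁻¹)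
        ≤ ∑ k ∈ Icc 2 n, (((k : ℝ) - 1)⁻¹ - (k : ℝ)⁻¹) := by
          refine sum_le_sum_of_subset_of_nonneg ?_ fun k hk _ => ?_
          · rw [Nat.primesLE_eq_filter_Icc_two]; exact filter_subset _ _
          · have : (2 : ℝ) ≤ k := by exact_mod_cast (mem_Icc.1 hk).1
            exact sub_nonneg.2 (inv_anti₀ (by linarith) (by linarith))
      _ ≤ 1 := by
          rw [sum_Icc_inv_sub_one_sub_inv (by omega)]
          linarith [inv_nonneg.2 (Nat.cast_nonneg (α := ℝ) n)]
  have hlog : 0 < log n := log_pos (by exact_mod_cast hn)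
  calc exp (log (log 2) - 4) / log n
      = exp (-(log (log n) + 3 - log (log 2) + 1)) := by
        rw [div_eq_mul_inv, ← exp_log hlog, ← exp_neg, ← exp_add, exp_log hlog]
        ring_nf
    _ ≤ exp (-∑ p ∈ n.primesLE, ((p : ℝ) - 1)⁻¹) := by
        gcongr
        have hsplit := sum_sub_distrib (s := n.primesLE) (fun p : ℕ => ((p : ℝ) - 1)⁻¹)
          (fun p => (p : ℝ)⁻¹)
        linarith [sum_primesLE_inv_le hn]
    _ = ∏ p ∈ n.primesLE, exp (-((p : ℝ) - 1)⁻¹) := by rw [← sum_neg_distrib, exp_sum]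
    _ ≤ ∏ p ∈ n.primesLE, (1 - (p : ℝ)⁻¹) :=
        prod_le_prod (fun _ _ => (exp_pos _).le)
          fun p hp => exp_neg_inv_sub_one_le_one_sub_inv
            (by exact_mod_cast Nat.one_lt_of_mem_primesLE hp)

theorem totient_primorial_div_primorial (n : ℕ) :
    (φ (primorial n) : ℝ) / primorial n = ∏ p ∈ n.primesLE, (1 - (p : ℝ)⁻¹) := by
  have h := congrArg (Rat.cast : ℚ → ℝ) (Nat.totient_eq_mul_prod_factors (primorial n))
  push_cast at h
  rw [h, primeFactors_primorial,
    mul_div_cancel_left₀ _ (by exact_mod_cast primorial_ne_zero n)]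

theorem one_div_mul_log_le_totient_primorial_div {a : ℕ} (ha : 2 ≤ a) :
    1 / (a * log a)
      ≤ (exp (log (log 2) - 4))⁻¹ * ((φ (primorial a) : ℝ) / (a * primorial a)) := by
  have hlog : 0 < log a := log_pos (by exact_mod_cast ha)
  set c := exp (log (log 2) - 4)
  have hc : 0 < c := exp_pos _
  calc 1 / (a * log a) = c⁻¹ * (c / log a / a) := by field_simp
    _ ≤ c⁻¹ * ((∏ p ∈ a.primesLE, (1 - (p : ℝ)⁻¹)) / a) := by
        gcongr; exact exp_div_log_le_prod_primesLE_one_sub_inv ha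
    _ = c⁻¹ * ((φ (primorial a) : ℝ) / (a * primorial a)) := by
        rw [← totient_primorial_div_primorial, div_div, mul_comm (primorial a : ℝ)]

theorem stmt_3 (A : Set ℕ) (h2 : ∀ a ∈ A, 2 ≤ a)
    (hprim : ∀ a ∈ A, ∀ b ∈ A, a ≠ b → ¬ a ∣ b) :
    Summable (fun a : A => 1 / ((a : ℝ) * Real.log (a : ℕ))) := by
  have hA : ∀ a ∈ A, a ≠ 0 := fun a ha => by have := h2 a ha; omega
  have hsum := summable_totient_primorial_div hA fun a ha b hb => hprim a ha b hb
  exact (hsum.mul_left _).of_nonneg_of_le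
    (fun a => one_div_nonneg.2 (mul_nonneg (Nat.cast_nonneg _) (log_natCast_nonneg _)))
    fun a => one_div_mul_log_le_totient_primorial_div (h2 a a.2)
end

section
/- The series ∑_{p prime} 1/(p · log p) converges. -/
/-!
Split the primes into the dyadic blocks `2 ^ k ≤ p < 2 ^ (k + 1)`. Chebyshev's bound
`θ x ≤ x log 4` shows that the `k`-th block holds at most `2 ^ (k + 2) / k` primes, each
contributing at most `1 / (2 ^ k k log 2)`, so the block contributes `O(1 / k ^ 2)`.
-/

open Finset Real Chebyshev

theorem sum_log_le_log_four_mul {T : Finset {p : ℕ // p.Prime}} {n : ℕ}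
    (hT : ∀ p ∈ T, (p : ℕ) ≤ n) : ∑ p ∈ T, log (p : ℕ) ≤ log 4 * n :=
  calc ∑ p ∈ T, log (p : ℕ) = ∑ q ∈ T.map (.subtype _), log q := by rw [sum_map]; rfl
    _ ≤ ∑ q ∈ Nat.primesLE n, log q := by
      refine sum_le_sum_of_subset_of_nonneg (fun q hq => ?_) fun q _ _ => log_natCast_nonneg q
      obtain ⟨p, hp, rfl⟩ := mem_map.mp hq
      simpa [Nat.primesLE, Nat.primesBelow, Nat.lt_succ_iff] using ⟨hT p hp, p.2⟩
    _ = θ n := (theta_eq_sum_primesLE_log n).symm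
    _ ≤ log 4 * n := theta_le_log4_mul_x n.cast_nonneg

theorem two_pow_log_mul_le_mul_log {n : ℕ} (hn : n ≠ 0) :
    (2 : ℝ) ^ Nat.log 2 n * (Nat.log 2 n * log 2) ≤ n * log n := by
  have hpow : (2 : ℝ) ^ Nat.log 2 n ≤ n := mod_cast Nat.pow_log_le_self 2 hn
  have hlog : Nat.log 2 n * log 2 ≤ log n := by
    rw [← log_pow]
    exact log_le_log (by positivity) hpow
  exact mul_le_mul hpow hlog (by positivity) n.cast_nonneg

theorem card_mul_le_of_forall_log_eq {T : Finset {p : ℕ // p.Prime}} {k : ℕ}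
    (hT : ∀ p ∈ T, Nat.log 2 p = k) : T.card * k ≤ (2 : ℝ) ^ (k + 2) := by
  have hlt : ∀ p ∈ T, (p : ℕ) ≤ 2 ^ (k + 1) := fun p hp =>
    (hT p hp ▸ Nat.lt_pow_succ_log_self one_lt_two (p : ℕ)).le
  have key : T.card * (k * log 2) ≤ log 4 * 2 ^ (k + 1) :=
    calc T.card * (k * log 2) = ∑ p ∈ T, log ((2 : ℕ) ^ k : ℕ) := by
          simp [log_pow]
      _ ≤ ∑ p ∈ T, log (p : ℕ) := sum_le_sum fun p hp => by
          gcongr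
          exact hT p hp ▸ Nat.pow_log_le_self 2 p.2.ne_zero
      _ ≤ log 4 * 2 ^ (k + 1) := by exact_mod_cast sum_log_le_log_four_mul hlt
  have h4 : log 4 = 2 * log 2 := by
    rw [show (4 : ℝ) = 2 ^ 2 by norm_num, log_pow]; norm_num
  rw [h4] at key
  have := log_pos one_lt_two
  nlinarith [pow_succ (2 : ℝ) (k + 1)]

theorem sum_one_div_mul_log_le_of_forall_log_eq {T : Finset {p : ℕ // p.Prime}} {k : ℕ}
    (hT : ∀ p ∈ T, Nat.log 2 p = k) :
    ∑ p ∈ T, 1 / ((p : ℝ) * log (p : ℕ)) ≤ 4 / log 2 * (1 / (k : ℝ) ^ 2) := by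
  have hlog2 := log_pos one_lt_two
  rcases T.eq_empty_or_nonempty with rfl | ⟨p₀, hp₀⟩
  · simp only [sum_empty]; positivity
  have hk : 1 ≤ k := hT p₀ hp₀ ▸ Nat.log_pos one_lt_two p₀.2.two_le
  calc ∑ p ∈ T, 1 / ((p : ℝ) * log (p : ℕ))
      ≤ ∑ p ∈ T, 1 / ((2 : ℝ) ^ k * (k * log 2)) := sum_le_sum fun p hp =>
        one_div_le_one_div_of_le (by positivity) (hT p hp ▸ two_pow_log_mul_le_mul_log p.2.ne_zero)
    _ = T.card * k / (2 ^ k * k ^ 2 * log 2) := by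
        rw [sum_const, nsmul_eq_mul]
        field_simp
    _ ≤ 2 ^ (k + 2) / (2 ^ k * k ^ 2 * log 2) := by
        gcongr
        exact card_mul_le_of_forall_log_eq hT
    _ = 4 / log 2 * (1 / (k : ℝ) ^ 2) := by
        field_simp
        ring

theorem stmt_6 :
    Summable (fun p : {p : ℕ // p.Prime} => 1 / ((p : ℝ) * Real.log (p : ℕ))) := by
  refine summable_of_sum_le (c := ∑' k : ℕ, 4 / log 2 * (1 / (k : ℝ) ^ 2))
    (fun p => one_div_nonneg.mpr (mul_nonneg (Nat.cast_nonneg _) (log_natCast_nonneg _)))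
    fun S => ?_
  calc ∑ p ∈ S, 1 / ((p : ℝ) * log (p : ℕ))
      = ∑ k ∈ S.image (Nat.log 2 ∘ Subtype.val),
          ∑ p ∈ S with Nat.log 2 p.val = k, 1 / ((p : ℝ) * log (p : ℕ)) :=
        (sum_fiberwise_of_maps_to (fun p hp => mem_image_of_mem _ hp) _).symm
    _ ≤ ∑ k ∈ S.image (Nat.log 2 ∘ Subtype.val), 4 / log 2 * (1 / (k : ℝ) ^ 2) :=
        sum_le_sum fun k _ =>
          sum_one_div_mul_log_le_of_forall_log_eq fun p hp => (mem_filter.mp hp).2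
    _ ≤ ∑' k : ℕ, 4 / log 2 * (1 / (k : ℝ) ^ 2) :=
        Summable.sum_le_tsum _ (fun k _ => by positivity)
          ((summable_one_div_nat_pow.mpr one_lt_two).mul_left _)
end
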